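/- arXiv:2412.13007 — 6 statements merged into one kernel-verified Lean document; each statement's English description precedes it below -/
import Mathlib

section
/- Let A be a smooth (1,1)-tensor field on a simply connected open subset of R^n (e.g. all of R^n) with components a_{ij}. Suppose dx_m is a conservation law for A for every 1 ≤ m ≤ n (i.e. ∂a_{mj}/∂x_k = ∂a_{mk}/∂x_j for all m,j,k) and du^(0) is a conservation law for A, where u^(0) = Σ x_k². Then there exists a smooth function f with a_{ij} = ∂²f/∂x_i∂x_j; in particular a_{ij} is symmetric. -/
set_option maxHeartbeats 1000000
set_option synthInstance.maxHeartbeats 200000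


open scoped BigOperators

/-- Partial derivative of a function on ℝⁿ in the `i`-th coordinate direction. -/
noncomputable def pd {n : ℕ} (i : Fin n) (f : (Fin n → ℝ) → ℝ) : (Fin n → ℝ) → ℝ :=
  fun x => fderiv ℝ f x (Pi.single i 1)

/-- Nijenhuis tensor of a (1,1)-tensor field `A` on flat ℝⁿ. -/
noncomputable def nijenhuis {n : ℕ} (A : Fin n → Fin n → (Fin n → ℝ) → ℝ)
    (i j k : Fin n) (x : Fin n → ℝ) : ℝ :=
  ∑ a, (pd a (A i k) x * A a j x - pd a (A i j) x * A a k x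
    + (pd k (A a j) x - pd j (A a k) x) * A i a x)

/-- Haantjes tensor of a (1,1)-tensor field `A` on flat ℝⁿ. -/
noncomputable def haantjes {n : ℕ} (A : Fin n → Fin n → (Fin n → ℝ) → ℝ)
    (i j k : Fin n) (x : Fin n → ℝ) : ℝ :=
  ∑ a, ∑ b, (nijenhuis A b j k x * A i a x * A a b x
    + nijenhuis A i a b x * A a j x * A b k x
    - A i a x * (nijenhuis A a b k x * A b j x + nijenhuis A a j b x * A b k x))

open Set MeasureTheory intervalIntegral Metric
open scoped ENNReal NNReal


open Set MeasureTheory intervalIntegral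
open scoped ENNReal NNReal

lemma exists_primitive {n : ℕ} (G : (Fin n → ℝ) → ((Fin n → ℝ) →L[ℝ] ℝ))
    (hG : ContDiff ℝ (⊤ : ℕ∞) G)
    (hsym : ∀ x v w, fderiv ℝ G x v w = fderiv ℝ G x w v) :
    ∃ f : (Fin n → ℝ) → ℝ, ContDiff ℝ (⊤ : ℕ∞) f ∧ ∀ x, fderiv ℝ f x = G x := by
  classical
  have hGd : Differentiable ℝ G := hG.differentiable (by simp)
  have hGc : Continuous G := hG.continuous
  have hDc : Continuous (fderiv ℝ G) := hG.continuous_fderiv (by simp)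
  set D := fderiv ℝ G with hD
  set f : (Fin n → ℝ) → ℝ := fun x => ∫ t in (0:ℝ)..1, G (t • x) x with hf
  set F' : (Fin n → ℝ) → ℝ → ((Fin n → ℝ) →L[ℝ] ℝ) := fun x t =>
    G (t • x) + t • ((ContinuousLinearMap.apply ℝ ℝ x).comp (D (t • x))) with hF'
  have hF'cont : Continuous fun p : ℝ × (Fin n → ℝ) => F' p.2 p.1 := by
    apply Continuous.add
    · exact hGc.comp (continuous_fst.smul continuous_snd)
    · exact continuous_fst.smul
        ((((ContinuousLinearMap.apply ℝ ℝ :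
            (Fin n → ℝ) →L[ℝ] ((Fin n → ℝ) →L[ℝ] ℝ) →L[ℝ] ℝ)).continuous.comp
            continuous_snd).clm_comp (hDc.comp (continuous_fst.smul continuous_snd)))
  have hdiff : ∀ (t : ℝ) (x : Fin n → ℝ), HasFDerivAt (fun y => G (t • y) y) (F' x t) x := by
    intro t x
    have h1 : HasFDerivAt (fun y : Fin n → ℝ => t • y)
        (t • ContinuousLinearMap.id ℝ (Fin n → ℝ)) x :=
      (t • ContinuousLinearMap.id ℝ (Fin n → ℝ)).hasFDerivAt
    have h2 : HasFDerivAt (fun y => G (t • y))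
        ((D (t • x)).comp (t • ContinuousLinearMap.id ℝ (Fin n → ℝ))) x :=
      (hGd (t • x)).hasFDerivAt.comp x h1
    have h3 := h2.clm_apply (hasFDerivAt_id x)
    refine h3.congr_fderiv ?_
    ext v
    simp [hF', ContinuousLinearMap.smul_apply, mul_comm]
  have key : ∀ x₀, HasFDerivAt f (G x₀) x₀ := by
    intro x₀
    obtain ⟨C, hC⟩ := ((isCompact_Icc (a := (0:ℝ)) (b := 1)).prod
      (isCompact_closedBall x₀ 1)).exists_bound_of_continuousOn hF'cont.continuousOn
    have step := intervalIntegral.hasFDerivAt_integral_of_dominated_of_fderiv_le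
      (μ := volume) (F := fun x t => G (t • x) x) (F' := F') (x₀ := x₀) (a := 0) (b := 1)
      (bound := fun _ => C) (s := ball x₀ 1) (ball_mem_nhds x₀ one_pos)
      (Filter.Eventually.of_forall fun x =>
        (((ContinuousLinearMap.apply ℝ ℝ x).continuous.comp
          (hGc.comp (continuous_id.smul continuous_const)))).aestronglyMeasurable)
      (((ContinuousLinearMap.apply ℝ ℝ x₀).continuous.comp
          (hGc.comp (continuous_id.smul continuous_const))).intervalIntegrable _ _)
      ((hF'cont.comp (continuous_id.prodMk continuous_const)).aestronglyMeasurable)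
      ?_ (intervalIntegrable_const) ?_
    · have heq : (∫ t in (0:ℝ)..1, F' x₀ t) = G x₀ := by
        have hder : ∀ t ∈ uIcc (0:ℝ) 1,
            HasDerivAt (fun t : ℝ => t • G (t • x₀)) (F' x₀ t) t := by
          intro t _
          have h1 : HasDerivAt (fun t : ℝ => G (t • x₀)) (D (t • x₀) x₀) t := by
            have := (hGd (t • x₀)).hasFDerivAt.comp_hasDerivAt t ((hasDerivAt_id t).smul_const x₀)
            simp only [id, one_smul] at this
            exact this
          have h2 := (hasDerivAt_id t).smul h1
          refine h2.congr_deriv ?_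
          ext v
          simp [hF', ContinuousLinearMap.smul_apply, hsym (t • x₀) v x₀]
          ring
        have hcont : Continuous fun t : ℝ => F' x₀ t :=
          hF'cont.comp (continuous_id.prodMk continuous_const)
        have := intervalIntegral.integral_eq_sub_of_hasDerivAt hder
          (hcont.intervalIntegrable _ _)
        simpa using this
      rw [heq] at step
      exact step
    · filter_upwards with t ht x hx
      rw [Set.uIoc_of_le (zero_le_one' ℝ)] at ht
      exact hC (t, x) ⟨⟨ht.1.le, ht.2⟩, ball_subset_closedBall hx⟩
    · filter_upwards with t ht x hx
      exact hdiff t x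
  have hfe : fderiv ℝ f = G := funext fun x => (key x).fderiv
  exact ⟨f, contDiff_infty_iff_fderiv.mpr ⟨fun x => (key x).differentiableAt, hfe ▸ hG⟩,
    fun x => (key x).fderiv⟩

noncomputable def oneForm {n : ℕ} (c : Fin n → (Fin n → ℝ) → ℝ) (x : Fin n → ℝ) :
    (Fin n → ℝ) →L[ℝ] ℝ := ∑ j, c j x • ContinuousLinearMap.proj j

lemma oneForm_contDiff {n : ℕ} (c : Fin n → (Fin n → ℝ) → ℝ)
    (hc : ∀ j, ContDiff ℝ (⊤ : ℕ∞) (c j)) : ContDiff ℝ (⊤ : ℕ∞) (oneForm c) :=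
  ContDiff.sum fun j _ => (hc j).smul contDiff_const

lemma oneForm_apply {n : ℕ} (c : Fin n → (Fin n → ℝ) → ℝ) (x : Fin n → ℝ) (j : Fin n) :
    oneForm c x (Pi.single j 1) = c j x := by
  simp [oneForm, ContinuousLinearMap.sum_apply, Pi.single_apply]

lemma oneForm_hasFDerivAt {n : ℕ} (c : Fin n → (Fin n → ℝ) → ℝ)
    (hc : ∀ j, ContDiff ℝ (⊤ : ℕ∞) (c j)) (x : Fin n → ℝ) :
    HasFDerivAt (oneForm c)
      (∑ j, (fderiv ℝ (c j) x).smulRight (ContinuousLinearMap.proj j)) x :=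
  HasFDerivAt.fun_sum fun j _ =>
    (((hc j).differentiable (by simp) x).hasFDerivAt).smul_const
      (ContinuousLinearMap.proj j : (Fin n → ℝ) →L[ℝ] ℝ)

lemma oneForm_fderiv_apply {n : ℕ} (c : Fin n → (Fin n → ℝ) → ℝ)
    (hc : ∀ j, ContDiff ℝ (⊤ : ℕ∞) (c j)) (x v : Fin n → ℝ) (j : Fin n) :
    fderiv ℝ (oneForm c) x v (Pi.single j 1) = fderiv ℝ (c j) x v := by
  rw [(oneForm_hasFDerivAt c hc x).fderiv]
  simp [ContinuousLinearMap.sum_apply, Pi.single_apply]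

lemma bilin_symm {n : ℕ} (B : (Fin n → ℝ) →L[ℝ] ((Fin n → ℝ) →L[ℝ] ℝ))
    (h : ∀ k j : Fin n, B (Pi.single k 1) (Pi.single j 1) = B (Pi.single j 1) (Pi.single k 1))
    (v w : Fin n → ℝ) : B v w = B w v := by
  have hrep : ∀ u : Fin n → ℝ, u = ∑ k, u k • (Pi.single k 1 : Fin n → ℝ) := by
    intro u; funext i
    rw [Finset.sum_apply]
    simp [Pi.single_apply]
  have expand : ∀ u z : Fin n → ℝ,
      B u z = ∑ k, ∑ j, u k * z j * B (Pi.single k 1) (Pi.single j 1) := by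
    intro u z
    calc B u z = B (∑ k, u k • (Pi.single k 1 : Fin n → ℝ)) (∑ j, z j • (Pi.single j 1 : Fin n → ℝ)) := by
          rw [← hrep u, ← hrep z]
      _ = ∑ k, ∑ j, u k * z j * B (Pi.single k 1) (Pi.single j 1) := by
          simp only [_root_.map_sum, _root_.map_smul, ContinuousLinearMap.sum_apply,
            ContinuousLinearMap.smul_apply, ContinuousLinearMap.coe_sum', Finset.sum_apply,
            smul_eq_mul]
          rw [Finset.sum_comm]
          refine Finset.sum_congr rfl fun k _ => ?_
          rw [Finset.mul_sum]
          exact Finset.sum_congr rfl fun j _ => by ring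
  rw [expand v w, expand w v, Finset.sum_comm]
  refine Finset.sum_congr rfl fun k _ => Finset.sum_congr rfl fun j _ => ?_
  rw [h j k]; ring

/-- A smooth (1,1)-tensor field on ℝⁿ admitting the conservation
laws `dxₘ` (1 ≤ m ≤ n) and `du⁰` (u⁰ = Σ xₖ²) is the Hessian of a function. -/
theorem stmt2 (n : ℕ) (a : Fin n → Fin n → (Fin n → ℝ) → ℝ)
    (ha : ∀ i j, ContDiff ℝ (⊤ : ℕ∞) (a i j))
    (hdx : ∀ m j k : Fin n, ∀ x : Fin n → ℝ, pd k (a m j) x = pd j (a m k) x)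
    (hdu0 : ∀ j k : Fin n, ∀ x : Fin n → ℝ,
      pd k (fun y => ∑ i, 2 * y i * a i j y) x
        = pd j (fun y => ∑ i, 2 * y i * a i k y) x) :
    ∃ f : (Fin n → ℝ) → ℝ, ContDiff ℝ (⊤ : ℕ∞) f ∧
      ∀ i j : Fin n, a i j = pd i (pd j f) := by
  classical
  -- Step 1: the tensor is symmetric
  have hs : ∀ (j : Fin n) (x : Fin n → ℝ), HasFDerivAt (fun y => ∑ i, 2 * y i * a i j y)
      (∑ i, ((2 * x i) • fderiv ℝ (a i j) x
        + a i j x • ((2:ℝ) • (ContinuousLinearMap.proj i : (Fin n → ℝ) →L[ℝ] ℝ)))) x := by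
    intro j x
    refine HasFDerivAt.fun_sum fun i _ => ?_
    have hc : HasFDerivAt (fun y : Fin n → ℝ => 2 * y i)
        ((2:ℝ) • (ContinuousLinearMap.proj i : (Fin n → ℝ) →L[ℝ] ℝ)) x :=
      (ContinuousLinearMap.proj i : (Fin n → ℝ) →L[ℝ] ℝ).hasFDerivAt.const_mul 2
    exact hc.mul ((ha i j).differentiable (by simp) x).hasFDerivAt
  have hpds : ∀ (j k : Fin n) (x : Fin n → ℝ),
      pd k (fun y => ∑ i, 2 * y i * a i j y) x
        = (∑ i, (2 * x i) * pd k (a i j) x) + 2 * a k j x := by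
    intro j k x
    show fderiv ℝ _ x (Pi.single k 1) = _
    rw [(hs j x).fderiv]
    simp only [ContinuousLinearMap.sum_apply, ContinuousLinearMap.add_apply,
      ContinuousLinearMap.smul_apply, ContinuousLinearMap.proj_apply, smul_eq_mul,
      Finset.sum_add_distrib]
    congr 1
    simp [Pi.single_apply, mul_ite, mul_comm]
  have hsymm : ∀ (j k : Fin n) (x : Fin n → ℝ), a k j x = a j k x := by
    intro j k x
    have h0 := hdu0 j k x
    rw [hpds j k x, hpds k j x] at h0
    have hsum : (∑ i, (2 * x i) * pd k (a i j) x) = ∑ i, (2 * x i) * pd j (a i k) x :=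
      Finset.sum_congr rfl fun i _ => by rw [hdx i j k x]
    rw [hsum] at h0
    linarith
  -- Step 2: each row is a gradient
  have hrow : ∀ m, ∃ g : (Fin n → ℝ) → ℝ, ContDiff ℝ (⊤ : ℕ∞) g ∧
      ∀ x, fderiv ℝ g x = oneForm (a m) x := by
    intro m
    refine exists_primitive (oneForm (a m)) (oneForm_contDiff _ (ha m)) ?_
    intro x v w
    refine bilin_symm _ (fun k j => ?_) v w
    rw [oneForm_fderiv_apply _ (ha m), oneForm_fderiv_apply _ (ha m)]
    exact hdx m j k x
  choose g hg1 hg2 using hrow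
  have hgpd : ∀ m j x, pd j (g m) x = a m j x := by
    intro m j x
    show fderiv ℝ (g m) x (Pi.single j 1) = _
    rw [hg2 m x, oneForm_apply]
  -- Step 3: the row potentials are themselves a gradient
  obtain ⟨f, hf1, hf2⟩ : ∃ f : (Fin n → ℝ) → ℝ, ContDiff ℝ (⊤ : ℕ∞) f ∧
      ∀ x, fderiv ℝ f x = oneForm g x := by
    refine exists_primitive (oneForm g) (oneForm_contDiff _ hg1) ?_
    intro x v w
    refine bilin_symm _ (fun k j => ?_) v w
    rw [oneForm_fderiv_apply _ hg1, oneForm_fderiv_apply _ hg1]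
    show pd k (g j) x = pd j (g k) x
    rw [hgpd, hgpd, hsymm]
  have hpdf : ∀ m, pd m f = g m := by
    intro m
    funext x
    show fderiv ℝ f x (Pi.single m 1) = _
    rw [hf2 x, oneForm_apply]
  refine ⟨f, hf1, fun i j => ?_⟩
  funext x
  rw [hpdf j]
  rw [show pd i (g j) x = a j i x from hgpd j i x]
  exact hsymm j i x
end

section
/- On the open subset of R³ where x₁,x₂,x₃ ≠ 0, let K be the (1,1)-tensor field with components as in the Smorodinski–Winternitz I family: K = [[b₄x₂²+b₅x₃²+b₁, −b₄x₁x₂, −b₅x₁x₃], [−b₄x₁x₂, b₄x₁²+b₆x₃²+b₂, −b₆x₂x₃], [−b₅x₁x₃, −b₆x₂x₃, b₅x₁²+b₆x₂²+b₃]]. Then for each r ∈ {0,1,2,3}, the 1-form K*(du^(r)) is closed, where u^(0) = x₁²+x₂²+x₃², u^(1) = 1/x₁², u^(2) = 1/x₂², u^(3) = 1/x₃². -/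
/-!
Each 1-form `K*(du^(r))` is exact on the region where no coordinate vanishes: it is the
differential of `V⁽⁰⁾ = b₁x₁² + b₂x₂² + b₃x₃²`, respectively of
`V⁽¹⁾ = (b₁ + b₄x₂² + b₅x₃²)/x₁²` and its two cyclic analogues. Exact forms are closed
because second partial derivatives of a `C²` function commute.
-/

open scoped BigOperators

/-- The Smorodinski–Winternitz I family of (1,1)-tensor fields on ℝ³. -/
noncomputable def KSWI (b₁ b₂ b₃ b₄ b₅ b₆ : ℝ) (x : Fin 3 → ℝ) :
    Matrix (Fin 3) (Fin 3) ℝ :=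
  !![b₄ * (x 1)^2 + b₅ * (x 2)^2 + b₁, -(b₄ * x 0 * x 1), -(b₅ * x 0 * x 2);
     -(b₄ * x 0 * x 1), b₄ * (x 0)^2 + b₆ * (x 2)^2 + b₂, -(b₆ * x 1 * x 2);
     -(b₅ * x 0 * x 2), -(b₆ * x 1 * x 2), b₅ * (x 0)^2 + b₆ * (x 1)^2 + b₃]

/-- The four potentials `u⁰ = Σ xₖ²`, `u^(m) = 1/xₘ²`. -/
noncomputable def uSWI : Fin 4 → (Fin 3 → ℝ) → ℝ
  | 0 => fun x => (x 0)^2 + (x 1)^2 + (x 2)^2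
  | 1 => fun x => 1 / (x 0)^2
  | 2 => fun x => 1 / (x 1)^2
  | 3 => fun x => 1 / (x 2)^2

open Filter Topology

theorem pd_eq_deriv_update {n : ℕ} {f : (Fin n → ℝ) → ℝ} {x : Fin n → ℝ} (i : Fin n)
    (hf : DifferentiableAt ℝ f x) :
    pd i f x = deriv (fun t => f (Function.update x i t)) (x i) := by
  have hf' : DifferentiableAt ℝ f (Function.update x i (x i)) := by
    rwa [Function.update_eq_self]
  rw [← Function.comp_def, fderiv_comp_deriv _ hf' (hasDerivAt_update x i _).differentiableAt,
    deriv_update, Function.update_eq_self, pd]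

theorem pd_congr_of_eventuallyEq {n : ℕ} {f g : (Fin n → ℝ) → ℝ} {x : Fin n → ℝ}
    (h : f =ᶠ[𝓝 x] g) (k : Fin n) : pd k f x = pd k g x := by
  rw [pd, pd, h.fderiv_eq]

theorem pd_pd_comm {n : ℕ} {f : (Fin n → ℝ) → ℝ} {x : Fin n → ℝ} (hf : ContDiffAt ℝ 2 f x)
    (j k : Fin n) : pd k (pd j f) x = pd j (pd k f) x := by
  have hdf : DifferentiableAt ℝ (fderiv ℝ f) x :=
    (hf.fderiv_right (m := 1) (by norm_num)).differentiableAt one_ne_zero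
  have pd_pd_eq (j k : Fin n) :
      pd k (pd j f) x = fderiv ℝ (fderiv ℝ f) x (Pi.single k 1) (Pi.single j 1) := by
    unfold pd
    rw [fderiv_clm_apply hdf (differentiableAt_const _)]
    simp only [fderiv_fun_const, Pi.zero_apply, ContinuousLinearMap.comp_zero, zero_add,
      ContinuousLinearMap.flip_apply]
  rw [pd_pd_eq, pd_pd_eq, (hf.isSymmSndFDerivAt (by simp)).eq]

theorem pd_comm_of_eventuallyEq_pd {n : ℕ} {ω : Fin n → (Fin n → ℝ) → ℝ}
    {V : (Fin n → ℝ) → ℝ} {x : Fin n → ℝ} (hV : ContDiffAt ℝ 2 V x)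
    (hω : ∀ j, ω j =ᶠ[𝓝 x] pd j V) (j k : Fin n) :
    pd k (ω j) x = pd j (ω k) x := by
  rw [pd_congr_of_eventuallyEq (hω j), pd_congr_of_eventuallyEq (hω k), pd_pd_comm hV]

theorem eventually_forall_ne_zero {n : ℕ} {x : Fin n → ℝ} (hx : ∀ i, x i ≠ 0) :
    ∀ᶠ y in 𝓝 x, ∀ i, y i ≠ 0 :=
  eventually_all.2 fun i => (continuous_apply i).continuousAt.eventually_ne (hx i)

noncomputable def potentialSWI (b₁ b₂ b₃ b₄ b₅ b₆ : ℝ) : Fin 4 → (Fin 3 → ℝ) → ℝ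
  | 0 => fun x => b₁ * (x 0)^2 + b₂ * (x 1)^2 + b₃ * (x 2)^2
  | 1 => fun x => (b₁ + b₄ * (x 1)^2 + b₅ * (x 2)^2) / (x 0)^2
  | 2 => fun x => (b₂ + b₄ * (x 0)^2 + b₆ * (x 2)^2) / (x 1)^2
  | 3 => fun x => (b₃ + b₅ * (x 0)^2 + b₆ * (x 1)^2) / (x 2)^2

theorem contDiffAt_potentialSWI (b₁ b₂ b₃ b₄ b₅ b₆ : ℝ) (r : Fin 4) {x : Fin 3 → ℝ}
    (hx : ∀ i, x i ≠ 0) : ContDiffAt ℝ 2 (potentialSWI b₁ b₂ b₃ b₄ b₅ b₆ r) x := by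
  fin_cases r <;> simp only [potentialSWI] <;> fun_prop (disch := simp [hx])

theorem differentiableAt_uSWI (r : Fin 4) {x : Fin 3 → ℝ} (hx : ∀ i, x i ≠ 0) :
    DifferentiableAt ℝ (uSWI r) x := by
  fin_cases r <;> simp only [uSWI] <;> fun_prop (disch := simp [hx])

theorem sum_pd_uSWI_mul_KSWI (b₁ b₂ b₃ b₄ b₅ b₆ : ℝ) (r : Fin 4) (j : Fin 3)
    {x : Fin 3 → ℝ} (hx : ∀ i, x i ≠ 0) :
    ∑ i, pd i (uSWI r) x * KSWI b₁ b₂ b₃ b₄ b₅ b₆ x i j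
      = pd j (potentialSWI b₁ b₂ b₃ b₄ b₅ b₆ r) x := by
  simp only [pd_eq_deriv_update _ (differentiableAt_uSWI r hx),
    pd_eq_deriv_update _
      ((contDiffAt_potentialSWI b₁ b₂ b₃ b₄ b₅ b₆ r hx).differentiableAt two_ne_zero)]
  fin_cases r <;> fin_cases j <;>
    simp [Fin.sum_univ_three, uSWI, potentialSWI, KSWI, Function.update_apply, hx] <;>
    field_simp <;> ring

/-- On the set where all coordinates are nonzero, each 1-form
`K*(du^(r))`, with components `j ↦ Σᵢ (∂u/∂xᵢ) Kⁱⱼ`, is closed. -/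
theorem stmt10 (b₁ b₂ b₃ b₄ b₅ b₆ : ℝ) :
    ∀ r : Fin 4, ∀ j k : Fin 3, ∀ x : Fin 3 → ℝ, (∀ i, x i ≠ 0) →
      pd k (fun y => ∑ i, pd i (uSWI r) y * KSWI b₁ b₂ b₃ b₄ b₅ b₆ y i j) x
        = pd j (fun y => ∑ i, pd i (uSWI r) y * KSWI b₁ b₂ b₃ b₄ b₅ b₆ y i k) x := by
  intro r j k x hx
  refine pd_comm_of_eventuallyEq_pd
    (ω := fun j y => ∑ i, pd i (uSWI r) y * KSWI b₁ b₂ b₃ b₄ b₅ b₆ y i j)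
    (contDiffAt_potentialSWI b₁ b₂ b₃ b₄ b₅ b₆ r hx) (fun j => ?_) j k
  filter_upwards [eventually_forall_ne_zero hx] with y hy
  exact sum_pd_uSWI_mul_KSWI b₁ b₂ b₃ b₄ b₅ b₆ r j hy
end

section
/- Let J(b₁,…,b₆) = b₂b₄b₅ − b₃b₄b₅ − b₁b₄b₆ + b₃b₄b₆ + b₁b₅b₆ − b₂b₅b₆. There is no 5-dimensional linear subspace of R⁶ contained in the zero set {b ∈ R⁶ : J(b) = 0}. -/
open scoped BigOperators

/-- The cubic polynomial J on ℝ⁶ (with b₁,…,b₆ ↦ b 0,…,b 5). -/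
def Jpoly (b : Fin 6 → ℝ) : ℝ :=
  b 1 * b 3 * b 4 - b 2 * b 3 * b 4 - b 0 * b 3 * b 5
    + b 2 * b 3 * b 5 + b 0 * b 4 * b 5 - b 1 * b 4 * b 5


/-- Helper: an explicit vector in `ℝ⁶`. -/
def v6 (x0 x1 x2 x3 x4 x5 : ℝ) : Fin 6 → ℝ :=
  fun j => if j = 0 then x0 else if j = 1 then x1 else if j = 2 then x2
    else if j = 3 then x3 else if j = 4 then x4 else x5

lemma v6sum (x0 x1 x2 x3 x4 x5 : ℝ) (c : Fin 6 → ℝ) :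
    (∑ i, v6 x0 x1 x2 x3 x4 x5 i * c i) =
      x0 * c 0 + x1 * c 1 + x2 * c 2 + x3 * c 3 + x4 * c 4 + x5 * c 5 := by
  simp [Fin.sum_univ_six, v6]

lemma v6J (x0 x1 x2 x3 x4 x5 : ℝ) :
    Jpoly (v6 x0 x1 x2 x3 x4 x5) =
      x1 * x3 * x4 - x2 * x3 * x4 - x0 * x3 * x5 + x2 * x3 * x5 + x0 * x4 * x5 - x1 * x4 * x5 := by
  simp [Jpoly, v6]

lemma cube_ne (x : ℝ) (hx : x ≠ 0) : x * x * x ≠ 0 := by positivity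

/-- Algebraic core: `J` does not vanish on the kernel of any nonzero linear form. -/
lemma core (c : Fin 6 → ℝ) (hc : c ≠ 0)
    (h : ∀ b : Fin 6 → ℝ, (∑ i, b i * c i) = 0 → Jpoly b = 0) : False := by
  obtain ⟨i, hi⟩ := Function.ne_iff.mp hc
  simp only [Pi.zero_apply] at hi
  fin_cases i
  · have h0 := h (v6 (-(c 2 + c 3 + c 4)) 0 (c 0) (c 0) (c 0) 0)
      (by rw [v6sum]; ring)
    rw [v6J] at h0
    exact cube_ne (c 0) hi (by linarith [h0])
  · have h0 := h (v6 0 (-(c 2 + c 3 + c 5)) (c 1) (c 1) 0 (c 1))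
      (by rw [v6sum]; ring)
    rw [v6J] at h0
    exact cube_ne (c 1) hi (by linarith [h0])
  · have h0 := h (v6 0 (c 2) (-(c 1 + c 4 + c 5)) 0 (c 2) (c 2))
      (by rw [v6sum]; ring)
    rw [v6J] at h0
    exact cube_ne (c 2) hi (by nlinarith [h0])
  · have h0 := h (v6 (c 3) (-(c 3)) 0 (-(c 0 - c 1 + c 4 - c 5)) (c 3) (-(c 3)))
      (by rw [v6sum]; ring)
    rw [v6J] at h0
    exact cube_ne (c 3) hi (by nlinarith [h0])
  · have h0 := h (v6 (c 4) 0 (-(c 4)) (c 4) (-(c 0 - c 2 + c 3 - c 5)) (-(c 4)))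
      (by rw [v6sum]; ring)
    rw [v6J] at h0
    exact cube_ne (c 4) hi (by nlinarith [h0])
  · have h0 := h (v6 0 (c 5) (-(c 5)) (c 5) (-(c 5)) (-(c 1 - c 2 + c 3 - c 4)))
      (by rw [v6sum]; ring)
    rw [v6J] at h0
    exact cube_ne (c 5) hi (by nlinarith [h0])

/-- No 5-dimensional linear subspace of ℝ⁶ is contained in the
zero set of J. -/
theorem stmt12 :
    ¬ ∃ S : Submodule ℝ (Fin 6 → ℝ),
        Module.finrank ℝ S = 5 ∧ ∀ b ∈ S, Jpoly b = 0 := by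
  rintro ⟨S, hrank, hJ⟩
  have hdim : Module.finrank ℝ (Fin 6 → ℝ) = 6 := Module.finrank_fin_fun ℝ
  have hlt : S < ⊤ := by
    rw [lt_top_iff_ne_top]
    intro hS
    rw [hS, finrank_top, hdim] at hrank
    norm_num at hrank
  obtain ⟨f, hf0, hfmap⟩ := S.exists_dual_map_eq_bot_of_lt_top hlt inferInstance
  have hSker : S ≤ LinearMap.ker f := by
    intro b hb
    have : f b ∈ S.map f := Submodule.mem_map_of_mem hb
    rw [hfmap] at this
    simpa using this
  have hkerrank : Module.finrank ℝ (LinearMap.ker f) = 5 := by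
    have hrn := f.finrank_range_add_finrank_ker
    rw [hdim] at hrn
    have h1 : Module.finrank ℝ (LinearMap.range f) = 1 := by
      have hle : Module.finrank ℝ (LinearMap.range f) ≤ 1 := by
        simpa using (LinearMap.range f).finrank_le
      have hne : LinearMap.range f ≠ ⊥ := by
        simpa [LinearMap.range_eq_bot] using hf0
      have hne0 : Module.finrank ℝ (LinearMap.range f) ≠ 0 := fun h0 =>
        hne ((Submodule.finrank_eq_zero (R := ℝ) (S := LinearMap.range f)).mp h0)
      omega
    omega
  have hSeq : S = LinearMap.ker f :=
    Submodule.eq_of_le_of_finrank_eq hSker (by rw [hrank, hkerrank])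
  set c : Fin 6 → ℝ := fun i => f (fun j => if i = j then 1 else 0) with hcdef
  have hfb : ∀ b : Fin 6 → ℝ, f b = ∑ i, b i * c i := by
    intro b
    rw [f.pi_apply_eq_sum_univ b]
    simp only [smul_eq_mul, hcdef]
  refine core c ?_ ?_
  · intro hc0
    apply hf0
    apply LinearMap.ext
    intro b
    rw [hfb b, hc0]
    simp
  · intro b hb
    exact hJ b (by rw [hSeq, LinearMap.mem_ker, hfb b]; exact hb)
end

section
/- On R³, for any real parameters b₁,b₂,b₃,b₅, the (1,1)-tensor field K = b₁ dx₁² + b₂ dx₂² + b₃ dx₃² + b₅ (x₃dx₁ − x₁dx₃)², i.e. with matrix [[b₁ + b₅x₃², 0, −b₅x₁x₃], [0, b₂, 0], [−b₅x₁x₃, 0, b₃ + b₅x₁²]], has vanishing Haantjes tensor. -/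
open scoped BigOperators

/-!
The field `K` is the direct sum of the constant operator `b₂` on the `x₂`-axis and a `2 × 2`
block acting on the `(x₁, x₃)`-plane that does not depend on `x₂`. Hence the Nijenhuis tensor
vanishes as soon as one of its indices is `2`, so it has the form `N(X, Y) = ω(X, Y) v` with
`ω = dx₁ ∧ dx₃` and `v` in the `(x₁, x₃)`-plane. For a torsion of this shape the Haantjes tensor
is `H(X, Y) = ω(X, Y) (K² - tr K · K + det K) v`, with trace and determinant of the block, and
this vanishes by Cayley–Hamilton in dimension two.
-/

open Matrix

lemma pd_eq_zero_of_forall_add_single {n : ℕ} {m : Fin n} {f : (Fin n → ℝ) → ℝ}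
    (hf : ∀ y t, f (y + Pi.single m t) = f y) (x : Fin n → ℝ) : pd m f x = 0 := by
  by_cases hdiff : DifferentiableAt ℝ f x
  · have hline := hdiff.hasFDerivAt.hasLineDerivAt (Pi.single m 1)
    have hconst : HasLineDerivAt ℝ f 0 x (Pi.single m 1) := by
      refine (hasDerivAt_const (0 : ℝ) (f x)).congr_of_eventuallyEq
        (Filter.Eventually.of_forall fun t => ?_)
      simp only [← Pi.single_smul, smul_eq_mul, mul_one, hf]
    exact hline.unique hconst
  · simp [pd, fderiv_zero_of_not_differentiableAt hdiff]

section Nijenhuis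

variable {n : ℕ} (A : Fin n → Fin n → (Fin n → ℝ) → ℝ)

lemma nijenhuis_swap (i j k : Fin n) (x : Fin n → ℝ) :
    nijenhuis A i k j x = -nijenhuis A i j k x := by
  simp only [nijenhuis, ← Finset.sum_neg_distrib]
  congr 1; ext a; ring

lemma nijenhuis_self (i j : Fin n) (x : Fin n → ℝ) : nijenhuis A i j j x = 0 := by
  simp [nijenhuis]

lemma nijenhuis_eq_zero_of_const_row {m : Fin n} (hconst : ∀ c k x, pd c (A m k) x = 0)
    (hdiag : ∀ a x, a ≠ m → A m a x = 0) (j k : Fin n) (x : Fin n → ℝ) :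
    nijenhuis A m j k x = 0 := by
  rw [nijenhuis, Finset.sum_eq_single m]
  · simp [hconst]
  · intro a _ ha; simp [hconst, hdiag a x ha]
  · simp

lemma nijenhuis_eq_zero_of_const_column {m : Fin n} (hinv : ∀ i k x, pd m (A i k) x = 0)
    (hconst : ∀ a c x, pd c (A a m) x = 0) (hdiag : ∀ a x, a ≠ m → A a m x = 0)
    (i k : Fin n) (x : Fin n → ℝ) : nijenhuis A i m k x = 0 := by
  rw [nijenhuis, Finset.sum_eq_single m]
  · simp [hconst, hinv]
  · intro a _ ha; simp [hconst, hinv, hdiag a x ha]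
  · simp

end Nijenhuis

def haantjesForm {R ι : Type*} [CommRing R] [Fintype ι] (A : Matrix ι ι R) (T : ι → ι → ι → R)
    (i j k : ι) : R :=
  ∑ a, ∑ b, (T b j k * A i a * A a b + T i a b * A a j * A b k
    - A i a * (T a b k * A b j + T a j b * A b k))

lemma haantjes_eq_haantjesForm {n : ℕ} (A : Fin n → Fin n → (Fin n → ℝ) → ℝ) (i j k : Fin n)
    (x : Fin n → ℝ) :
    haantjes A i j k x
      = haantjesForm (fun i j => A i j x) (fun i j k => nijenhuis A i j k x) i j k :=
  rfl

lemma haantjesForm_tensor_product {R ι : Type*} [CommRing R] [Fintype ι] (A ω : Matrix ι ι R)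
    (v : ι → R) (t d : R) (hdet : Aᵀ * ω * A = d • ω) (htr : Aᵀ * ω + ω * A = t • ω)
    (i j k : ι) :
    haantjesForm A (fun i j k => v i * ω j k) i j k
      = ((A * A) *ᵥ v - t • A *ᵥ v + d • v) i * ω j k := by
  have hdet_jk := congrFun (congrFun hdet j) k
  have htr_jk := congrFun (congrFun htr j) k
  simp only [mul_apply, transpose_apply, Matrix.smul_apply, Matrix.add_apply,
    smul_eq_mul, Finset.sum_mul] at hdet_jk htr_jk
  rw [Finset.sum_comm] at hdet_jk
  have hAAv : ∑ a, ∑ b, v b * ω j k * A i a * A a b = ((A * A) *ᵥ v) i * ω j k := by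
    simp only [mulVec, dotProduct, mul_apply, Finset.sum_mul]
    rw [Finset.sum_comm]
    exact Finset.sum_congr rfl fun _ _ => Finset.sum_congr rfl fun _ _ => by ring
  have hpullback : ∑ a, ∑ b, v i * ω a b * A a j * A b k = v i * (d * ω j k) := by
    simp only [← hdet_jk, Finset.mul_sum]
    exact Finset.sum_congr rfl fun _ _ => Finset.sum_congr rfl fun _ _ => by ring
  have hL : ∑ a, ∑ b, A i a * (v a * ω b k * A b j) = (A *ᵥ v) i * ∑ b, A b j * ω b k := by
    simp only [mulVec, dotProduct, Finset.sum_mul_sum]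
    exact Finset.sum_congr rfl fun _ _ => Finset.sum_congr rfl fun _ _ => by ring
  have hR : ∑ a, ∑ b, A i a * (v a * ω j b * A b k) = (A *ᵥ v) i * ∑ b, ω j b * A b k := by
    simp only [mulVec, dotProduct, Finset.sum_mul_sum]
    exact Finset.sum_congr rfl fun _ _ => Finset.sum_congr rfl fun _ _ => by ring
  simp only [haantjesForm, Finset.sum_add_distrib, Finset.sum_sub_distrib, mul_add, hAAv,
    hpullback, hL, hR, Pi.add_apply, Pi.sub_apply, Pi.smul_apply, smul_eq_mul]
  linear_combination (-(A *ᵥ v) i) * htr_jk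

-- The area form `dx₁ ∧ dx₃` of ℝ³, with coordinates indexed from `0`.
def wedge02 {R : Type*} [Ring R] : Matrix (Fin 3) (Fin 3) R := !![0, 0, 1; 0, 0, 0; -1, 0, 0]

lemma eq_mul_wedge02 {R : Type*} [CommRing R] (T : Fin 3 → Fin 3 → Fin 3 → R)
    (hswap : ∀ i j k, T i k j = -T i j k) (hself : ∀ i j, T i j j = 0)
    (hmid : ∀ i k, T i 1 k = 0) (i j k : Fin 3) : T i j k = T i 0 2 * wedge02 j k := by
  have hmid' : ∀ j, T i j 1 = 0 := fun j => by rw [hswap, hmid, neg_zero]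
  fin_cases j <;> fin_cases k <;> simp [wedge02, hself, hmid, hmid', hswap i 2 0]

lemma haantjesForm_block_eq_zero {R : Type*} [CommRing R] (p q r s c : R) (v : Fin 3 → R)
    (hv : v 1 = 0) (i j k : Fin 3) :
    haantjesForm !![p, 0, q; 0, c, 0; r, 0, s] (fun i j k => v i * wedge02 j k) i j k = 0 := by
  set A : Matrix (Fin 3) (Fin 3) R := !![p, 0, q; 0, c, 0; r, 0, s]
  have hcayleyHamilton : (A * A) *ᵥ v - (p + s) • A *ᵥ v + (p * s - q * r) • v = 0 := by
    ext a; fin_cases a <;> simp [A, hv, dotProduct, Fin.sum_univ_three] <;> ring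
  have hdet : Aᵀ * wedge02 * A = (p * s - q * r) • wedge02 := by
    ext a b
    fin_cases a <;> fin_cases b <;> simp [A, wedge02, mul_apply, Fin.sum_univ_three] <;> ring
  have htr : Aᵀ * wedge02 + wedge02 * A = (p + s) • wedge02 := by
    ext a b; fin_cases a <;> fin_cases b <;> simp [A, wedge02, mul_apply, Fin.sum_univ_three]
  rw [haantjesForm_tensor_product A wedge02 v _ _ hdet htr, hcayleyHamilton, Pi.zero_apply,
    zero_mul]

/-- The SW I family members with b₄ = b₆ = 0, i.e.
`K = b₁dx₁² + b₂dx₂² + b₃dx₃² + b₅(x₃dx₁ − x₁dx₃)²`, have vanishing Haantjes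
tensor. -/
theorem stmt13 (b₁ b₂ b₃ b₅ : ℝ) (K : Fin 3 → Fin 3 → (Fin 3 → ℝ) → ℝ)
    (hK : ∀ x : Fin 3 → ℝ,
      (fun i j => K i j x) =
        fun i j => (!![b₁ + b₅ * (x 2)^2, 0, -(b₅ * x 0 * x 2);
                      0, b₂, 0;
                      -(b₅ * x 0 * x 2), 0, b₃ + b₅ * (x 0)^2] :
                      Matrix (Fin 3) (Fin 3) ℝ) i j) :
    ∀ i j k : Fin 3, ∀ x : Fin 3 → ℝ, haantjes K i j k x = 0 := by
  intro i j k x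
  have hentry : ∀ y a b, K a b y = _ := fun y a b => congr_fun₂ (hK y) a b
  have hindep : ∀ a b y t, K a b (y + Pi.single 1 t) = K a b y := by
    intro a b y t; fin_cases a <;> fin_cases b <;> simp [hentry]
  have hrow_const : ∀ c b y t, K 1 b (y + Pi.single c t) = K 1 b y := by
    intro c b y t; fin_cases b <;> simp [hentry]
  have hcol_const : ∀ c a y t, K a 1 (y + Pi.single c t) = K a 1 y := by
    intro c a y t; fin_cases a <;> simp [hentry]
  have hrow : ∀ j k, nijenhuis K 1 j k x = 0 := fun j k =>
    nijenhuis_eq_zero_of_const_row K (m := 1)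
      (fun c b => pd_eq_zero_of_forall_add_single (hrow_const c b))
      (fun a y ha => by fin_cases a <;> simp_all) j k x
  have hcol : ∀ i k, nijenhuis K i 1 k x = 0 := fun i k =>
    nijenhuis_eq_zero_of_const_column K (m := 1)
      (fun a b => pd_eq_zero_of_forall_add_single (hindep a b))
      (fun a c => pd_eq_zero_of_forall_add_single (hcol_const c a))
      (fun a y ha => by fin_cases a <;> simp_all) i k x
  have hshape := eq_mul_wedge02 (fun i j k => nijenhuis K i j k x)
    (fun i j k => nijenhuis_swap K i j k x) (fun i j => nijenhuis_self K i j x) hcol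
  rw [haantjes_eq_haantjesForm, hK x, funext₃ hshape]
  exact haantjesForm_block_eq_zero _ _ _ _ _ _ (hrow 0 2) i j k
end

section
/- On R⁶ = T*R³ with canonical coordinates (x₁,x₂,x₃,p₁,p₂,p₃) and Poisson bracket {F,G} = Σ_i (∂F/∂p_i ∂G/∂x_i − ∂F/∂x_i ∂G/∂p_i), let H = p₁²+p₂²+p₃² + a₀(x₁²+x₂²+x₃²) + a₁/x₁² + a₂/x₂² + a₃/x₃² and F = (x₃p₁ − x₁p₃)² + x₃²·a₁/x₁² + x₁²·a₃/x₃². Then {H,F} = 0 on the open set where x₁,x₂,x₃ ≠ 0. -/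
open scoped BigOperators

/-- Phase space T*ℝ³ with points (x, p). -/
abbrev Phase : Type := (Fin 3 → ℝ) × (Fin 3 → ℝ)

/-- Partial derivative in the position direction xᵢ. -/
noncomputable def pdx (i : Fin 3) (F : Phase → ℝ) : Phase → ℝ :=
  fun z => fderiv ℝ F z (Pi.single i 1, 0)

/-- Partial derivative in the momentum direction pᵢ. -/
noncomputable def pdp (i : Fin 3) (F : Phase → ℝ) : Phase → ℝ :=
  fun z => fderiv ℝ F z (0, Pi.single i 1)

/-- Canonical Poisson bracket on T*ℝ³. -/
noncomputable def poisson (F G : Phase → ℝ) : Phase → ℝ :=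
  fun z => ∑ i, (pdp i F z * pdx i G z - pdx i F z * pdp i G z)

/-!
`{H, F}` is the derivative of `F` along the Hamiltonian field `X_H = (∂H/∂p, -∂H/∂x)`, which is
explicit because `H = |p|² + Σₖ Vₖ(xₖ)` is separable. Write `F = L² + U` with
`L = xⱼpᵢ - xᵢpⱼ`. The rotation-invariant part `|p|² + a₀|x|²` of `H` commutes with `L`, so
`{H, L²} = 4L (aᵢxⱼ/xᵢ³ - aⱼxᵢ/xⱼ³)`, while `{H, U} = 2 (pᵢ ∂ᵢU + pⱼ ∂ⱼU)` is exactly its negative.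
-/

theorem HasFDerivAt.div {𝕜 E : Type*} [NontriviallyNormedField 𝕜] [NormedAddCommGroup E]
    [NormedSpace 𝕜 E] {f g : E → 𝕜} {f' g' : E →L[𝕜] 𝕜} {x : E}
    (hf : HasFDerivAt f f' x) (hg : HasFDerivAt g g' x) (hx : g x ≠ 0) :
    HasFDerivAt (fun y => f y / g y) ((g x)⁻¹ • f' - (f x / g x ^ 2) • g') x := by
  have hinv := (hasDerivAt_inv hx).comp_hasFDerivAt x hg
  have h : HasFDerivAt (fun y => f y * (g y)⁻¹) (f x • (-(g x ^ 2)⁻¹ • g') + (g x)⁻¹ • f') x :=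
    hf.mul hinv
  simp only [div_eq_mul_inv]
  refine h.congr_fderiv ?_
  ext v
  simp only [add_apply, sub_apply, smul_apply, smul_eq_mul]
  ring

def posCoord (i : Fin 3) : Phase →L[ℝ] ℝ :=
  (ContinuousLinearMap.proj i).comp (ContinuousLinearMap.fst ℝ _ _)

def momCoord (i : Fin 3) : Phase →L[ℝ] ℝ :=
  (ContinuousLinearMap.proj i).comp (ContinuousLinearMap.snd ℝ _ _)

@[simp]
theorem posCoord_apply (i : Fin 3) (v : Phase) : posCoord i v = v.1 i := rfl

@[simp]
theorem momCoord_apply (i : Fin 3) (v : Phase) : momCoord i v = v.2 i := rfl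

section Coordinates

variable (i : Fin 3) (z : Phase)

theorem hasFDerivAt_posCoord : HasFDerivAt (fun w : Phase => w.1 i) (posCoord i) z :=
  (posCoord i).hasFDerivAt

theorem hasFDerivAt_momCoord : HasFDerivAt (fun w : Phase => w.2 i) (momCoord i) z :=
  (momCoord i).hasFDerivAt

variable {i z} {φ : ℝ → ℝ} {φ' : ℝ}

theorem HasDerivAt.comp_posCoord (h : HasDerivAt φ φ' (z.1 i)) :
    HasFDerivAt (fun w : Phase => φ (w.1 i)) (φ' • posCoord i) z :=
  h.comp_hasFDerivAt z (hasFDerivAt_posCoord i z)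

theorem HasDerivAt.comp_momCoord (h : HasDerivAt φ φ' (z.2 i)) :
    HasFDerivAt (fun w : Phase => φ (w.2 i)) (φ' • momCoord i) z :=
  h.comp_hasFDerivAt z (hasFDerivAt_momCoord i z)

end Coordinates

noncomputable def hamiltonianField (H : Phase → ℝ) (z : Phase) : Phase :=
  (fun i => pdp i H z, fun i => -pdx i H z)

theorem poisson_eq_apply_hamiltonianField {H G : Phase → ℝ} {G' : Phase →L[ℝ] ℝ} {z : Phase}
    (hG : HasFDerivAt G G' z) : poisson H G z = G' (hamiltonianField H z) := by
  have hX : hamiltonianField H z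
      = ∑ i, (pdp i H z • (Pi.single i 1, 0) - pdx i H z • (0, Pi.single i 1)) := by
    ext j <;> simp [hamiltonianField, Prod.fst_sum, Prod.snd_sum, Pi.single_apply]
  simp only [hX, map_sum, map_sub, map_smul, smul_eq_mul, poisson, pdx, pdp, hG.fderiv]

theorem hamiltonianField_separable {T V : Fin 3 → ℝ → ℝ} {T' V' : Fin 3 → ℝ} {z : Phase}
    (hT : ∀ i, HasDerivAt (T i) (T' i) (z.2 i)) (hV : ∀ i, HasDerivAt (V i) (V' i) (z.1 i)) :
    hamiltonianField (fun w => ∑ i, (T i (w.2 i) + V i (w.1 i))) z = (T', -V') := by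
  have hH : HasFDerivAt (fun w : Phase => ∑ i, (T i (w.2 i) + V i (w.1 i)))
      (∑ i, (T' i • momCoord i + V' i • posCoord i)) z :=
    HasFDerivAt.fun_sum fun i _ => (hT i).comp_momCoord.add (hV i).comp_posCoord
  ext j <;> simp [hamiltonianField, pdx, pdp, hH.fderiv, Pi.single_apply]

theorem hasDerivAt_swPotential (a₀ c : ℝ) {x : ℝ} (hx : x ≠ 0) :
    HasDerivAt (fun t => a₀ * t ^ 2 + c / t ^ 2) (2 * a₀ * x - 2 * c / x ^ 3) x := by
  have h := ((hasDerivAt_pow 2 x).const_mul a₀).add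
    ((hasDerivAt_const x c).div (hasDerivAt_pow 2 x) (pow_ne_zero 2 hx))
  refine h.congr_deriv ?_
  field_simp
  ring

noncomputable def swHamiltonian (a₀ : ℝ) (a : Fin 3 → ℝ) : Phase → ℝ :=
  fun w => ∑ i, (w.2 i ^ 2 + (a₀ * w.1 i ^ 2 + a i / w.1 i ^ 2))

theorem hamiltonianField_swHamiltonian (a₀ : ℝ) (a : Fin 3 → ℝ) {z : Phase}
    (hz : ∀ i, z.1 i ≠ 0) :
    hamiltonianField (swHamiltonian a₀ a) z
      = (fun i => 2 * z.2 i, fun i => 2 * a i / z.1 i ^ 3 - 2 * a₀ * z.1 i) := by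
  refine (hamiltonianField_separable (fun i => hasDerivAt_pow 2 (z.2 i))
    (fun i => hasDerivAt_swPotential a₀ (a i) (hz i))).trans ?_
  ext i <;> simp

/-- `F⁽⁵⁾` is the case `(i, j) = (1, 3)`, that is `angularIntegral ![a₁, a₂, a₃] 0 2`. -/
noncomputable def angularIntegral (a : Fin 3 → ℝ) (i j : Fin 3) : Phase → ℝ :=
  fun w => (w.1 j * w.2 i - w.1 i * w.2 j) ^ 2 + w.1 j ^ 2 * a i / w.1 i ^ 2
    + w.1 i ^ 2 * a j / w.1 j ^ 2

theorem poisson_swHamiltonian_angularIntegral (a₀ : ℝ) (a : Fin 3 → ℝ) (i j : Fin 3)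
    {z : Phase} (hz : ∀ k, z.1 k ≠ 0) :
    poisson (swHamiltonian a₀ a) (angularIntegral a i j) z = 0 := by
  have hx := fun k => hasFDerivAt_posCoord k z
  have hp := fun k => hasFDerivAt_momCoord k z
  have hF : HasFDerivAt (angularIntegral a i j) _ z :=
    (((((hx j).mul (hp i)).sub ((hx i).mul (hp j))).pow 2).add
      ((((hx j).pow 2).mul_const (a i)).div ((hx i).pow 2) (pow_ne_zero 2 (hz i)))).add
      ((((hx i).pow 2).mul_const (a j)).div ((hx j).pow 2) (pow_ne_zero 2 (hz j)))
  rw [poisson_eq_apply_hamiltonianField hF, hamiltonianField_swHamiltonian a₀ a hz]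
  have hxi := hz i
  have hxj := hz j
  simp only [Pi.sub_apply, Pi.mul_apply, Nat.add_one_sub_one, pow_one, nsmul_eq_mul,
    Nat.cast_ofNat, add_apply, sub_apply, smul_apply, smul_eq_mul,
    posCoord_apply, momCoord_apply]
  field_simp
  ring

/-- The SW I Hamiltonian Poisson-commutes with the integral
F⁽⁵⁾ = (x₃p₁ − x₁p₃)² + x₃²a₁/x₁² + x₁²a₃/x₃² where all xᵢ ≠ 0. -/
theorem stmt14 (a₀ a₁ a₂ a₃ : ℝ) (H F : Phase → ℝ)
    (hH : H = fun z => (z.2 0)^2 + (z.2 1)^2 + (z.2 2)^2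
      + a₀ * ((z.1 0)^2 + (z.1 1)^2 + (z.1 2)^2)
      + a₁ / (z.1 0)^2 + a₂ / (z.1 1)^2 + a₃ / (z.1 2)^2)
    (hF : F = fun z => (z.1 2 * z.2 0 - z.1 0 * z.2 2)^2
      + (z.1 2)^2 * a₁ / (z.1 0)^2 + (z.1 0)^2 * a₃ / (z.1 2)^2) :
    ∀ z : Phase, (∀ i, z.1 i ≠ 0) → poisson H F z = 0 := by
  intro z hz
  have hH' : H = swHamiltonian a₀ ![a₁, a₂, a₃] := by
    rw [hH]
    funext w
    simp only [swHamiltonian, Fin.sum_univ_three, Matrix.cons_val_zero, Matrix.cons_val_one,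
      Matrix.cons_val]
    ring
  have hF' : F = angularIntegral ![a₁, a₂, a₃] 0 2 := hF
  rw [hH', hF']
  exact poisson_swHamiltonian_angularIntegral a₀ _ 0 2 hz
end

section
/- On R³, let K be the (1,1)-tensor field with matrix [[b₁, b₅, −b₄x₃], [b₅, b₂, −b₆x₃], [−b₄x₃, −b₆x₃, 2b₄x₁ + 2b₆x₂ + b₃]] (the family compatible with the Smorodinski–Winternitz II potential V_OO). If b₁b₄b₆ − b₂b₄b₆ − b₄²b₅ + b₅b₆² ≠ 0, then the Haantjes tensor of K does not vanish identically. -/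
open scoped BigOperators

def dl (i j : Fin 3) : ℝ := if j = i then 1 else 0

lemma pd_affine (c₀ c₁ c₂ c₃ : ℝ) (i : Fin 3) (x : Fin 3 → ℝ) :
    pd i (fun y => c₀ + c₁ * y 0 + c₂ * y 1 + c₃ * y 2) x
      = c₁ * dl i 0 + c₂ * dl i 1 + c₃ * dl i 2 := by
  have hp : ∀ j : Fin 3, HasFDerivAt (fun y : Fin 3 → ℝ => y j)
      (ContinuousLinearMap.proj j : (Fin 3 → ℝ) →L[ℝ] ℝ) x :=
    fun j => (ContinuousLinearMap.proj j : (Fin 3 → ℝ) →L[ℝ] ℝ).hasFDerivAt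
  have h : HasFDerivAt (fun y : Fin 3 → ℝ => c₀ + c₁ * y 0 + c₂ * y 1 + c₃ * y 2)
      (((0 + c₁ • ContinuousLinearMap.proj 0) + c₂ • ContinuousLinearMap.proj 1)
        + c₃ • (ContinuousLinearMap.proj 2 : (Fin 3 → ℝ) →L[ℝ] ℝ)) x :=
    (((hasFDerivAt_const c₀ x).add ((hp 0).const_mul c₁)).add ((hp 1).const_mul c₂)).add
      ((hp 2).const_mul c₃)
  have := h.fderiv
  rw [pd, this]
  simp [dl, Pi.single_apply, eq_comm]

noncomputable def Kmat (b₁ b₂ b₃ b₄ b₅ b₆ : ℝ) : Fin 3 → Fin 3 → (Fin 3 → ℝ) → ℝ :=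
  ![![fun y => b₁ + 0 * y 0 + 0 * y 1 + 0 * y 2,
     fun y => b₅ + 0 * y 0 + 0 * y 1 + 0 * y 2,
     fun y => 0 + 0 * y 0 + 0 * y 1 + (-b₄) * y 2],
    ![fun y => b₅ + 0 * y 0 + 0 * y 1 + 0 * y 2,
     fun y => b₂ + 0 * y 0 + 0 * y 1 + 0 * y 2,
     fun y => 0 + 0 * y 0 + 0 * y 1 + (-b₆) * y 2],
    ![fun y => 0 + 0 * y 0 + 0 * y 1 + (-b₄) * y 2,
     fun y => 0 + 0 * y 0 + 0 * y 1 + (-b₆) * y 2,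
     fun y => b₃ + (2*b₄) * y 0 + (2*b₆) * y 1 + 0 * y 2]]

set_option maxHeartbeats 2000000 in
lemma hval (b₁ b₂ b₃ b₄ b₅ b₆ : ℝ) (x : Fin 3 → ℝ) :
    haantjes (Kmat b₁ b₂ b₃ b₄ b₅ b₆) 0 1 2 x
      = 2 * x 2 * (2*b₁ - b₂ - (2*b₄*x 0 + 2*b₆*x 1 + b₃))
        * (b₁*b₄*b₆ - b₂*b₄*b₆ - b₄^2*b₅ + b₅*b₆^2) := by
  simp only [haantjes, nijenhuis, Kmat, Fin.sum_univ_three,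
    Matrix.cons_val_zero, Matrix.cons_val_one, Matrix.head_cons,
    Matrix.cons_val_two, Matrix.tail_cons, pd_affine]
  simp only [dl]
  norm_num [Fin.ext_iff]
  ring


/-- For the family of Killing tensors compatible with the
Smorodinski–Winternitz II potential V_OO, if
b₁b₄b₆ − b₂b₄b₆ − b₄²b₅ + b₅b₆² ≠ 0, the Haantjes tensor does not vanish
identically. -/
theorem stmt17 (b₁ b₂ b₃ b₄ b₅ b₆ : ℝ) (K : Fin 3 → Fin 3 → (Fin 3 → ℝ) → ℝ)
    (hK : ∀ x : Fin 3 → ℝ,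
      (fun i j => K i j x) =
        fun i j => (!![b₁, b₅, -(b₄ * x 2);
                      b₅, b₂, -(b₆ * x 2);
                      -(b₄ * x 2), -(b₆ * x 2), 2*b₄*x 0 + 2*b₆*x 1 + b₃] :
                      Matrix (Fin 3) (Fin 3) ℝ) i j)
    (hb : b₁*b₄*b₆ - b₂*b₄*b₆ - b₄^2*b₅ + b₅*b₆^2 ≠ 0) :
    ∃ i j k : Fin 3, ∃ x : Fin 3 → ℝ, haantjes K i j k x ≠ 0 := by
  have hKe : K = Kmat b₁ b₂ b₃ b₄ b₅ b₆ := by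
    funext i j y
    have h := congrFun (congrFun (hK y) i) j
    rw [h]
    fin_cases i <;> fin_cases j <;>
      simp [Kmat, Matrix.cons_val_zero, Matrix.cons_val_one, Matrix.head_cons] <;> ring
  have hq : b₄^2 + b₆^2 ≠ 0 := by
    intro h
    have h4 : b₄ = 0 := by nlinarith [sq_nonneg b₄, sq_nonneg b₆]
    have h6 : b₆ = 0 := by nlinarith [sq_nonneg b₄, sq_nonneg b₆]
    apply hb; rw [h4, h6]; ring
  set s : ℝ := (2*b₁ - b₂ - b₃ - 1) / (2*(b₄^2 + b₆^2)) with hs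
  refine ⟨0, 1, 2, ![b₄*s, b₆*s, 1], ?_⟩
  rw [hKe, hval]
  have hx : (2*b₁ - b₂ - (2*b₄*(![b₄*s, b₆*s, (1:ℝ)] 0) + 2*b₆*(![b₄*s, b₆*s, (1:ℝ)] 1) + b₃)) = 1 := by
    simp only [Matrix.cons_val_zero, Matrix.cons_val_one, Matrix.head_cons, hs]
    field_simp
    ring
  simp only [Matrix.cons_val_zero, Matrix.cons_val_one, Matrix.head_cons] at hx ⊢
  rw [hx]
  simpa using hb
end
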